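/- arXiv:1002.4258 — 3 statements merged into one kernel-verified Lean document; each statement's English description precedes it below -/
import Mathlib

section
/- If A is a band-dominated operator on l²(Γ), then every sequence h : ℕ → Γ tending to infinity possesses a subsequence g such that the limit operator A_g exists, i.e., R_{g(m)}⁻¹ A R_{g(m)} and R_{g(m)}⁻¹ A* R_{g(m)} converge strongly as m → ∞. -/
open Filter Topology

/-- The generators of the algebra of band operators: operators of multiplication
by a bounded function and left translations `(L_t u)(x) = u(t⁻¹ x)`. -/
def ShiftAndMultOps (Γ : Type*) [Group Γ] [Countable Γ] :
    Set (lp (fun _ : Γ => ℂ) 2 →L[ℂ] lp (fun _ : Γ => ℂ) 2) :=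
  {T | (∃ a : Γ → ℂ, (∃ C, ∀ x, ‖a x‖ ≤ C) ∧
          ∀ (u : lp (fun _ : Γ => ℂ) 2) (x : Γ), T u x = a x * u x) ∨
       (∃ t : Γ, ∀ (u : lp (fun _ : Γ => ℂ) 2) (x : Γ), T u x = u (t⁻¹ * x))}

/-- The band-dominated operators: the norm closure of the algebra generated by
multiplication operators and left translations. -/
def BandDominatedOps (Γ : Type*) [Group Γ] [Countable Γ] :
    Set (lp (fun _ : Γ => ℂ) 2 →L[ℂ] lp (fun _ : Γ => ℂ) 2) :=
  closure (Algebra.adjoin ℂ (ShiftAndMultOps Γ) :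
    Set (lp (fun _ : Γ => ℂ) 2 →L[ℂ] lp (fun _ : Γ => ℂ) 2))

/-- A sequence `h : ℕ → Γ` tends to infinity if it eventually leaves every
finite subset of `Γ`. -/
def TendsToInfinityGrp {Γ : Type*} (h : ℕ → Γ) : Prop :=
  ∀ Γ₀ : Finset Γ, ∀ᶠ n in atTop, h n ∉ Γ₀

/-- `B` is the limit operator of `A` with respect to `h`:
`R_{h(m)}⁻¹ A R_{h(m)} → B` and `R_{h(m)}⁻¹ A* R_{h(m)} → B*` strongly. -/
def IsLimitOperator {Γ : Type*} [Group Γ] [Countable Γ]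
    (R : Γ → (lp (fun _ : Γ => ℂ) 2 →L[ℂ] lp (fun _ : Γ => ℂ) 2))
    (A : lp (fun _ : Γ => ℂ) 2 →L[ℂ] lp (fun _ : Γ => ℂ) 2)
    (h : ℕ → Γ)
    (B : lp (fun _ : Γ => ℂ) 2 →L[ℂ] lp (fun _ : Γ => ℂ) 2) : Prop :=
  (∀ u, Tendsto (fun m => ((R ((h m)⁻¹)).comp (A.comp (R (h m)))) u) atTop (𝓝 (B u))) ∧
  (∀ u, Tendsto (fun m =>
      ((R ((h m)⁻¹)).comp ((ContinuousLinearMap.adjoint A).comp (R (h m)))) u)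
    atTop (𝓝 (ContinuousLinearMap.adjoint B u)))

/-!
Conjugation by the unitary right translations `R g` is a ⋆-automorphism of `L(ℓ²(Γ))`, hence
contractive. The operators whose conjugates have, along some subsequence of any sequence in `Γ`,
a ⋆-strong limit form a subalgebra (pass to a subsequence twice; strong limits are compatible
with products of uniformly bounded sequences), and this subalgebra is norm closed (by a diagonal
argument the approximants have limits along one common subsequence, and these limits are Cauchy).
Left translations commute with every `R g`. The conjugates of a multiplication operator multiply
by translates of the symbol; by Tychonoff these have a pointwise convergent subsequence, and by
dominated convergence the multiplication operators then converge strongly.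
-/

open scoped lp

section StrongConvergence

variable {𝕜 E ι : Type*} [RCLike 𝕜] [NormedAddCommGroup E] [NormedSpace 𝕜 E]

def TendstoStrongly (T : ι → E →L[𝕜] E) (l : Filter ι) (B : E →L[𝕜] E) : Prop :=
  ∀ u, Tendsto (fun i => T i u) l (𝓝 (B u))

variable {T S : ι → E →L[𝕜] E} {l : Filter ι} {B B' : E →L[𝕜] E}

theorem TendstoStrongly.comp {κ : Type*} (hT : TendstoStrongly T l B) {f : κ → ι}
    {l' : Filter κ} (hf : Tendsto f l' l) :
    TendstoStrongly (fun k => T (f k)) l' B :=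
  fun u => (hT u).comp hf

theorem tendstoStrongly_map_iff {κ : Type*} {f : κ → ι} {l : Filter κ} :
    TendstoStrongly T (map f l) B ↔ TendstoStrongly (fun k => T (f k)) l B :=
  forall_congr' fun _ => tendsto_map'_iff

theorem TendstoStrongly.add (hT : TendstoStrongly T l B) (hS : TendstoStrongly S l B') :
    TendstoStrongly (fun i => T i + S i) l (B + B') :=
  fun u => (hT u).add (hS u)

theorem TendstoStrongly.sub (hT : TendstoStrongly T l B) (hS : TendstoStrongly S l B') :
    TendstoStrongly (fun i => T i - S i) l (B - B') :=
  fun u => (hT u).sub (hS u)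

theorem TendstoStrongly.mul {C : ℝ} (hT : TendstoStrongly T l B) (hS : TendstoStrongly S l B')
    (hTC : ∀ i, ‖T i‖ ≤ C) : TendstoStrongly (fun i => T i * S i) l (B * B') := by
  intro u
  have hsplit : ∀ i, (T i * S i) u = T i (S i u - B' u) + T i (B' u) := fun i => by
    simp
  have hfirst : Tendsto (fun i => T i (S i u - B' u)) l (𝓝 0) := by
    refine squeeze_zero_norm (fun i => (T i).le_of_opNorm_le (hTC i) _) ?_
    simpa using (tendsto_sub_nhds_zero_iff.2 (hS u)).norm.const_mul C
  simpa [hsplit] using hfirst.add (hT (B' u))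

theorem TendstoStrongly.opNorm_le [l.NeBot] {C : ℝ} (hT : TendstoStrongly T l B)
    (hTC : ∀ i, ‖T i‖ ≤ C) : ‖B‖ ≤ C := by
  obtain ⟨i⟩ := l.nonempty_of_neBot
  refine B.opNorm_le_bound ((norm_nonneg _).trans (hTC i)) fun u => ?_
  exact le_of_tendsto (hT u).norm (Eventually.of_forall fun i => (T i).le_of_opNorm_le (hTC i) u)

theorem TendstoStrongly.of_forall_approx
    (happrox : ∀ ε > 0, ∃ (T' : ι → E →L[𝕜] E) (B' : E →L[𝕜] E), TendstoStrongly T' l B' ∧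
      (∀ i, ‖T i - T' i‖ ≤ ε) ∧ ‖B - B'‖ ≤ ε) :
    TendstoStrongly T l B := by
  intro u
  rw [Metric.tendsto_nhds]
  intro δ hδ
  obtain ⟨T', B', hT', hTT', hBB'⟩ := happrox (δ / (3 * (‖u‖ + 1))) (by positivity)
  have hεu : δ / (3 * (‖u‖ + 1)) * ‖u‖ < δ / 3 := by
    rw [div_mul_eq_mul_div, div_lt_div_iff₀ (by positivity) (by positivity)]
    nlinarith [norm_nonneg u]
  filter_upwards [Metric.tendsto_nhds.1 (hT' u) (δ / 3) (by positivity)] with i hi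
  calc dist (T i u) (B u)
      ≤ dist (T i u) (T' i u) + dist (T' i u) (B' u) + dist (B' u) (B u) :=
        dist_triangle4 _ _ _ _
    _ ≤ ‖T i - T' i‖ * ‖u‖ + dist (T' i u) (B' u) + ‖B - B'‖ * ‖u‖ := by
        rw [dist_eq_norm (T i u), dist_eq_norm' (B' u), ← sub_apply, ← sub_apply]
        gcongr
        · exact (T i - T' i).le_opNorm u
        · exact (B - B').le_opNorm u
    _ < δ / 3 + δ / 3 + δ / 3 := by
        gcongr
        · exact (mul_le_mul_of_nonneg_right (hTT' i) (norm_nonneg u)).trans_lt hεu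
        · exact (mul_le_mul_of_nonneg_right hBB' (norm_nonneg u)).trans_lt hεu
    _ = δ := by ring

end StrongConvergence

section StarStrongConvergence

variable {𝕜 H ι : Type*} [RCLike 𝕜] [NormedAddCommGroup H] [InnerProductSpace 𝕜 H]
  [CompleteSpace H]

def TendstoStarStrongly (T : ι → H →L[𝕜] H) (l : Filter ι) (B : H →L[𝕜] H) : Prop :=
  TendstoStrongly T l B ∧ TendstoStrongly (fun i => star (T i)) l (star B)

variable {T S : ι → H →L[𝕜] H} {l : Filter ι} {B B' : H →L[𝕜] H}

theorem tendstoStarStrongly_const (B : H →L[𝕜] H) : TendstoStarStrongly (fun _ => B) l B :=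
  ⟨fun _ => tendsto_const_nhds, fun _ => tendsto_const_nhds⟩

theorem TendstoStarStrongly.comp {κ : Type*} (hT : TendstoStarStrongly T l B) {f : κ → ι}
    {l' : Filter κ} (hf : Tendsto f l' l) : TendstoStarStrongly (fun k => T (f k)) l' B :=
  ⟨hT.1.comp hf, hT.2.comp hf⟩

theorem tendstoStarStrongly_map_iff {κ : Type*} {f : κ → ι} {l : Filter κ} :
    TendstoStarStrongly T (map f l) B ↔ TendstoStarStrongly (fun k => T (f k)) l B :=
  and_congr tendstoStrongly_map_iff tendstoStrongly_map_iff

theorem TendstoStarStrongly.add (hT : TendstoStarStrongly T l B)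
    (hS : TendstoStarStrongly S l B') : TendstoStarStrongly (fun i => T i + S i) l (B + B') := by
  refine ⟨hT.1.add hS.1, ?_⟩
  simpa only [star_add] using hT.2.add hS.2

theorem TendstoStarStrongly.mul {C C' : ℝ} (hT : TendstoStarStrongly T l B)
    (hS : TendstoStarStrongly S l B') (hTC : ∀ i, ‖T i‖ ≤ C) (hSC : ∀ i, ‖S i‖ ≤ C') :
    TendstoStarStrongly (fun i => T i * S i) l (B * B') := by
  refine ⟨hT.1.mul hS.1 hTC, ?_⟩
  simpa only [star_mul] using hS.2.mul hT.2 fun i => (norm_star (S i)).trans_le (hSC i)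

theorem TendstoStarStrongly.of_forall_approx
    (happrox : ∀ ε > 0, ∃ (T' : ι → H →L[𝕜] H) (B' : H →L[𝕜] H), TendstoStarStrongly T' l B' ∧
      (∀ i, ‖T i - T' i‖ ≤ ε) ∧ ‖B - B'‖ ≤ ε) :
    TendstoStarStrongly T l B := by
  refine ⟨.of_forall_approx fun ε hε => ?_, .of_forall_approx fun ε hε => ?_⟩ <;>
  obtain ⟨T', B', hT', hTT', hBB'⟩ := happrox ε hε
  · exact ⟨T', B', hT'.1, hTT', hBB'⟩
  · refine ⟨fun i => star (T' i), star B', hT'.2, fun i => ?_, ?_⟩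
    · simpa only [← star_sub, norm_star] using hTT' i
    · simpa only [← star_sub, norm_star] using hBB'

end StarStrongConvergence

theorem tendsto_map_atTop_of_eventually_exists_ge {d f : ℕ → ℕ}
    (hd : ∀ᶠ k in atTop, ∃ j ≥ k, d k = f j) : Tendsto d atTop (map f atTop) := by
  rw [(atTop_basis.map f).tendsto_right_iff]
  intro N _
  filter_upwards [hd, eventually_ge_atTop N] with k ⟨j, hjk, hdk⟩ hNk
  exact ⟨j, le_trans hNk hjk, hdk.symm⟩

/-- Cantor's diagonal argument: `d k` is the `k`-th term of the `(k + 1)`-st nested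
subsequence. -/
theorem exists_strictMono_forall_of_exists_subseq {P : ℕ → (ℕ → ℕ) → Prop}
    (hP : ∀ n (φ : ℕ → ℕ), ∃ ψ : ℕ → ℕ, StrictMono ψ ∧ P n (φ ∘ ψ))
    (hP_map : ∀ n φ d, P n φ → Tendsto d atTop (map φ atTop) → P n d) :
    ∃ d : ℕ → ℕ, StrictMono d ∧ ∀ n, P n d := by
  choose ψ hψ_mono hψ using hP
  let F : ℕ → ℕ → ℕ := fun n => Nat.rec id (fun k f => f ∘ ψ k f) n
  have hF_succ : ∀ n, F (n + 1) = F n ∘ ψ n (F n) := fun n => rfl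
  have hF_add : ∀ n t, ∃ σ, StrictMono σ ∧ F (n + t) = F n ∘ σ := by
    intro n t
    induction t with
    | zero => exact ⟨id, strictMono_id, rfl⟩
    | succ t ih =>
      obtain ⟨σ, hσ, hFσ⟩ := ih
      refine ⟨σ ∘ ψ (n + t) (F (n + t)), hσ.comp (hψ_mono _ _), ?_⟩
      rw [← add_assoc, hF_succ, hFσ]
      rfl
  have hF_mono : ∀ n, StrictMono (F n) := fun n => by
    obtain ⟨σ, hσ, hFσ⟩ := hF_add 0 n
    rw [zero_add] at hFσ
    rwa [hFσ]
  refine ⟨fun k => F (k + 1) k, strictMono_nat_of_lt_succ fun k => ?_, fun n => ?_⟩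
  · calc F (k + 1) k < F (k + 1) (k + 1) := hF_mono (k + 1) k.lt_succ_self
      _ ≤ F (k + 1) (ψ (k + 1) (F (k + 1)) (k + 1)) :=
        (hF_mono (k + 1)).monotone (hψ_mono _ _).le_apply
      _ = F (k + 1 + 1) (k + 1) := rfl
  · refine hP_map n (F (n + 1)) _ (hψ n (F n)) (tendsto_map_atTop_of_eventually_exists_ge ?_)
    filter_upwards [eventually_ge_atTop n] with k hnk
    obtain ⟨σ, hσ, hFσ⟩ := hF_add (n + 1) (k - n)
    refine ⟨σ k, hσ.le_apply, ?_⟩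
    rw [show k + 1 = n + 1 + (k - n) by omega, hFσ]
    rfl

section SubseqLimits

variable {𝒜 H F ι : Type*} [NormedAddCommGroup H] [InnerProductSpace ℂ H] [CompleteSpace H]
  [FunLike F 𝒜 (H →L[ℂ] H)]

def HasSubseqStarStrongLimits (π : ι → F) (a : 𝒜) : Prop :=
  ∀ h : ℕ → ι, ∃ φ : ℕ → ℕ, StrictMono φ ∧
    ∃ B, TendstoStarStrongly (fun m => π (h (φ m)) a) atTop B

variable {π : ι → F}

theorem hasSubseqStarStrongLimits_of_forall_eq {a : 𝒜} {B : H →L[ℂ] H}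
    (hB : ∀ i, π i a = B) : HasSubseqStarStrongLimits π a :=
  fun _ => ⟨id, strictMono_id, B, by simpa only [hB] using tendstoStarStrongly_const B⟩

theorem HasSubseqStarStrongLimits.exists_subseq_pair {a b : 𝒜}
    (ha : HasSubseqStarStrongLimits π a) (hb : HasSubseqStarStrongLimits π b) (h : ℕ → ι) :
    ∃ φ : ℕ → ℕ, StrictMono φ ∧ ∃ B B',
      TendstoStarStrongly (fun m => π (h (φ m)) a) atTop B ∧
      TendstoStarStrongly (fun m => π (h (φ m)) b) atTop B' := by
  obtain ⟨φ, hφ, B, hB⟩ := ha h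
  obtain ⟨ψ, hψ, B', hB'⟩ := hb (h ∘ φ)
  exact ⟨φ ∘ ψ, hφ.comp hψ, B, B', hB.comp hψ.tendsto_atTop, hB'⟩

variable [CStarAlgebra 𝒜] [AlgHomClass F ℂ 𝒜 (H →L[ℂ] H)]

theorem HasSubseqStarStrongLimits.add {a b : 𝒜} (ha : HasSubseqStarStrongLimits π a)
    (hb : HasSubseqStarStrongLimits π b) : HasSubseqStarStrongLimits π (a + b) := fun h => by
  obtain ⟨φ, hφ, B, B', hB, hB'⟩ := ha.exists_subseq_pair hb h
  exact ⟨φ, hφ, B + B', by simpa only [map_add] using hB.add hB'⟩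

variable [StarHomClass F 𝒜 (H →L[ℂ] H)]

theorem HasSubseqStarStrongLimits.mul {a b : 𝒜} (ha : HasSubseqStarStrongLimits π a)
    (hb : HasSubseqStarStrongLimits π b) : HasSubseqStarStrongLimits π (a * b) := fun h => by
  obtain ⟨φ, hφ, B, B', hB, hB'⟩ := ha.exists_subseq_pair hb h
  refine ⟨φ, hφ, B * B', ?_⟩
  simpa only [map_mul] using hB.mul hB' (fun _ => NonUnitalStarAlgHom.norm_apply_le _ a)
    (fun _ => NonUnitalStarAlgHom.norm_apply_le _ b)

/-- The limits `B n` of the approximants `x n` form a Cauchy sequence, since ⋆-homomorphisms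
of C⋆-algebras are contractive; its limit is a limit for `a`. -/
theorem exists_tendstoStarStrongly_of_tendsto {κ : Type*} {ρ : κ → F} {l : Filter κ} [l.NeBot]
    {x : ℕ → 𝒜} {a : 𝒜} (hx : Tendsto x atTop (𝓝 a))
    (hB : ∀ n, ∃ B, TendstoStarStrongly (fun i => ρ i (x n)) l B) :
    ∃ B, TendstoStarStrongly (fun i => ρ i a) l B := by
  choose B hB using hB
  have hdist : ∀ n k, dist (B n) (B k) ≤ dist (x n) (x k) := fun n k => by
    rw [dist_eq_norm, dist_eq_norm]
    refine ((hB n).1.sub (hB k).1).opNorm_le fun i => ?_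
    rw [← map_sub]
    exact NonUnitalStarAlgHom.norm_apply_le (ρ i) (x n - x k)
  have hcauchy : CauchySeq B := Metric.cauchySeq_iff.2 fun ε hε =>
    (Metric.cauchySeq_iff.1 hx.cauchySeq ε hε).imp fun N hN m hm n hn =>
      (hdist m n).trans_lt (hN m hm n hn)
  obtain ⟨B₀, hB₀⟩ := cauchySeq_tendsto_of_complete hcauchy
  have hdist₀ : ∀ n, dist (B n) B₀ ≤ dist (x n) a := fun n =>
    le_of_tendsto_of_tendsto' (tendsto_const_nhds.dist hB₀) (tendsto_const_nhds.dist hx) (hdist n)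
  refine ⟨B₀, .of_forall_approx fun ε hε => ?_⟩
  obtain ⟨n, hn⟩ := (hx.eventually (Metric.ball_mem_nhds a hε)).exists
  refine ⟨fun i => ρ i (x n), B n, hB n, fun i => ?_, ?_⟩
  · rw [← map_sub]
    refine (NonUnitalStarAlgHom.norm_apply_le _ _).trans ?_
    rw [← dist_eq_norm, dist_comm]
    exact hn.le
  · rw [norm_sub_rev, ← dist_eq_norm]
    exact (hdist₀ n).trans hn.le

def subseqStarStrongLimitSubalgebra (π : ι → F) : Subalgebra ℂ 𝒜 where
  carrier := {a | HasSubseqStarStrongLimits π a}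
  mul_mem' := HasSubseqStarStrongLimits.mul
  add_mem' := HasSubseqStarStrongLimits.add
  algebraMap_mem' c :=
    hasSubseqStarStrongLimits_of_forall_eq fun i => AlgHomClass.commutes (π i) c

theorem isClosed_subseqStarStrongLimitSubalgebra :
    IsClosed (subseqStarStrongLimitSubalgebra π : Set 𝒜) := by
  refine isClosed_of_closure_subset fun a ha h => ?_
  obtain ⟨x, hxS, hxa⟩ := mem_closure_iff_seq_limit.1 ha
  obtain ⟨d, hd, hdx⟩ := exists_strictMono_forall_of_exists_subseq
    (P := fun n φ => ∃ B, TendstoStarStrongly (fun m => π (h (φ m)) (x n)) atTop B)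
    (fun n φ => hxS n (h ∘ φ))
    fun n φ d ⟨B, hB⟩ hdφ => ⟨B,
      ((tendstoStarStrongly_map_iff (T := fun k => π (h k) (x n)) (f := φ)).2 hB).comp hdφ⟩
  exact ⟨d, hd, exists_tendstoStarStrongly_of_tendsto hxa hdx⟩

end SubseqLimits

section MultiplicationOperators

variable {X : Type*}

theorem lp.hasSum_norm_sq {E : X → Type*} [∀ x, NormedAddCommGroup (E x)] (v : lp E 2) :
    HasSum (fun x => ‖v x‖ ^ 2) (‖v‖ ^ 2) := by
  have h := lp.hasSum_norm (p := 2) (by norm_num) v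
  norm_num at h
  exact_mod_cast h

def IsMultiplicationOperator (T : ℓ²(X, ℂ) →L[ℂ] ℓ²(X, ℂ)) (a : X → ℂ) : Prop :=
  ∀ u x, T u x = a x * u x

theorem exists_isMultiplicationOperator {a : X → ℂ} {C : ℝ} (ha : ∀ x, ‖a x‖ ≤ C) :
    ∃ T, IsMultiplicationOperator T a := by
  have hle : ∀ (u : ℓ²(X, ℂ)) x, ‖a x * u x‖ ≤ ‖((C : ℂ) • u) x‖ := fun u x => by
    rw [lp.coeFn_smul, Pi.smul_apply, norm_mul, norm_smul, Complex.norm_real, Real.norm_eq_abs]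
    gcongr
    exact (ha x).trans (le_abs_self C)
  let L : ℓ²(X, ℂ) →ₗ[ℂ] ℓ²(X, ℂ) :=
    { toFun := fun u => ⟨fun x => a x * u x, (lp.memℓp ((C : ℂ) • u)).mono' (hle u)⟩
      map_add' := fun u v => lp.ext <| funext fun x => mul_add (a x) (u x) (v x)
      map_smul' := fun c u => lp.ext <| funext fun x => mul_left_comm (a x) c (u x) }
  refine ⟨L.mkContinuous |C| fun u => ?_, fun u x => rfl⟩
  calc ‖L u‖ ≤ ‖(C : ℂ) • u‖ := lp.norm_mono two_ne_zero (hle u)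
    _ = |C| * ‖u‖ := by rw [norm_smul, Complex.norm_real, Real.norm_eq_abs]

/-- Test against the unit vectors: `(T* u) x = ⟪e_x, T* u⟫ = ⟪T e_x, u⟫ = conj (a x) * u x`. -/
theorem isMultiplicationOperator_star {T : ℓ²(X, ℂ) →L[ℂ] ℓ²(X, ℂ)} {a : X → ℂ}
    (hT : IsMultiplicationOperator T a) : IsMultiplicationOperator (star T) (star a) := by
  classical
  intro u x
  have hsingle : T (lp.single 2 x 1) = lp.single 2 x (a x) := by
    ext y
    rw [hT, lp.single_apply, lp.single_apply]
    by_cases hyx : y = x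
    · subst hyx; simp
    · simp [Pi.single_eq_of_ne hyx]
  calc (star T u) x = inner ℂ (lp.single 2 x (1 : ℂ)) (star T u) := by
        rw [lp.inner_single_left]; simp
    _ = inner ℂ (T (lp.single 2 x 1)) u := by
        rw [ContinuousLinearMap.star_eq_adjoint, ContinuousLinearMap.adjoint_inner_right]
    _ = star a x * u x := by
        rw [hsingle, lp.inner_single_left]; simp [mul_comm]

/-- Dominated convergence: `‖T i u - B u‖² = ∑ₓ |a i x - b x|² |u x|²` with summable majorant
`(2C)² |u x|²`. -/
theorem tendstoStrongly_of_isMultiplicationOperator {ι : Type*} {l : Filter ι} [l.NeBot]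
    {T : ι → ℓ²(X, ℂ) →L[ℂ] ℓ²(X, ℂ)} {a : ι → X → ℂ} {B : ℓ²(X, ℂ) →L[ℂ] ℓ²(X, ℂ)}
    {b : X → ℂ} {C : ℝ} (hT : ∀ i, IsMultiplicationOperator (T i) (a i))
    (hB : IsMultiplicationOperator B b) (ha : ∀ i x, ‖a i x‖ ≤ C)
    (hab : ∀ x, Tendsto (fun i => a i x) l (𝓝 (b x))) : TendstoStrongly T l B := by
  intro u
  have hb : ∀ x, ‖b x‖ ≤ C := fun x =>
    le_of_tendsto (hab x).norm (Eventually.of_forall fun i => ha i x)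
  have hpoint : ∀ i x, (T i u - B u) x = (a i x - b x) * u x := fun i x => by
    rw [lp.coeFn_sub, Pi.sub_apply, hT, hB, sub_mul]
  have hlim : ∀ x, Tendsto (fun i => ‖(a i x - b x) * u x‖ ^ 2) l (𝓝 0) := fun x => by
    simpa using (((hab x).sub_const (b x)).mul_const (u x)).norm.pow 2
  have hbound : ∀ i x, ‖‖(a i x - b x) * u x‖ ^ 2‖ ≤ (2 * C) ^ 2 * ‖u x‖ ^ 2 := fun i x => by
    rw [Real.norm_of_nonneg (by positivity), norm_mul, mul_pow]
    gcongr
    calc ‖a i x - b x‖ ≤ ‖a i x‖ + ‖b x‖ := norm_sub_le _ _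
      _ ≤ 2 * C := by linarith [ha i x, hb x]
  have hsq : Tendsto (fun i => ‖T i u - B u‖ ^ 2) l (𝓝 0) := by
    have h := tendsto_tsum_of_dominated_convergence ((lp.hasSum_norm_sq u).summable.mul_left _)
      hlim (Eventually.of_forall hbound)
    simp only [← hpoint, (lp.hasSum_norm_sq _).tsum_eq, tsum_zero] at h
    exact h
  rw [tendsto_iff_norm_sub_tendsto_zero]
  simpa [Function.comp_def, Real.sqrt_sq_eq_abs] using (Real.continuous_sqrt.tendsto 0).comp hsq

theorem tendstoStarStrongly_of_isMultiplicationOperator {ι : Type*} {l : Filter ι} [l.NeBot]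
    {T : ι → ℓ²(X, ℂ) →L[ℂ] ℓ²(X, ℂ)} {a : ι → X → ℂ} {B : ℓ²(X, ℂ) →L[ℂ] ℓ²(X, ℂ)}
    {b : X → ℂ} {C : ℝ} (hT : ∀ i, IsMultiplicationOperator (T i) (a i))
    (hB : IsMultiplicationOperator B b) (ha : ∀ i x, ‖a i x‖ ≤ C)
    (hab : ∀ x, Tendsto (fun i => a i x) l (𝓝 (b x))) : TendstoStarStrongly T l B :=
  ⟨tendstoStrongly_of_isMultiplicationOperator hT hB ha hab,
    tendstoStrongly_of_isMultiplicationOperator (fun i => isMultiplicationOperator_star (hT i))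
      (isMultiplicationOperator_star hB) (fun i x => (norm_star (a i x)).trans_le (ha i x))
      fun x => (hab x).star⟩

end MultiplicationOperators

theorem exists_strictMono_tendsto_pi_of_norm_le {X E : Type*} [Countable X]
    [NormedAddCommGroup E] [ProperSpace E] {a : ℕ → X → E} {C : ℝ} (ha : ∀ m x, ‖a m x‖ ≤ C) :
    ∃ φ : ℕ → ℕ, StrictMono φ ∧ ∃ b : X → E, ∀ x, Tendsto (fun m => a (φ m) x) atTop (𝓝 (b x)) := by
  have hcpt := isCompact_univ_pi fun _ : X => isCompact_closedBall (0 : E) C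
  obtain ⟨b, -, φ, hφ, hconv⟩ := hcpt.tendsto_subseq fun m =>
    Set.mem_univ_pi.2 fun x => mem_closedBall_zero_iff.2 (ha m x)
  exact ⟨φ, hφ, b, tendsto_pi_nhds.1 hconv⟩

section RightTranslations

variable {Γ : Type*} [Group Γ]

def IsRightTranslation (R : Γ → ℓ²(Γ, ℂ) →L[ℂ] ℓ²(Γ, ℂ)) : Prop :=
  ∀ (r : Γ) (u : ℓ²(Γ, ℂ)) (x : Γ), R r u x = u (x * r)

variable {R : Γ → ℓ²(Γ, ℂ) →L[ℂ] ℓ²(Γ, ℂ)}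

namespace IsRightTranslation

theorem apply_apply (hR : IsRightTranslation R) (r : Γ) (u : ℓ²(Γ, ℂ)) (x : Γ) :
    R r u x = u (x * r) :=
  hR r u x

theorem apply_mul (hR : IsRightTranslation R) (r s : Γ) : R (r * s) = R r * R s := by
  ext u x
  simp [hR.apply_apply, mul_assoc]

theorem apply_one (hR : IsRightTranslation R) : R 1 = 1 := by
  ext u x
  simp [hR.apply_apply]

theorem star_apply (hR : IsRightTranslation R) (r : Γ) : star (R r) = R r⁻¹ := by
  rw [ContinuousLinearMap.star_eq_adjoint, eq_comm, ContinuousLinearMap.eq_adjoint_iff]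
  intro u v
  rw [lp.inner_eq_tsum, lp.inner_eq_tsum, ← (Equiv.mulRight r).tsum_eq]
  simp [hR.apply_apply]

theorem mem_unitary (hR : IsRightTranslation R) (r : Γ) :
    R r ∈ unitary (ℓ²(Γ, ℂ) →L[ℂ] ℓ²(Γ, ℂ)) := by
  rw [Unitary.mem_iff, hR.star_apply, ← hR.apply_mul, ← hR.apply_mul, inv_mul_cancel,
    mul_inv_cancel, hR.apply_one, and_self]

noncomputable def conj (hR : IsRightTranslation R) (g : Γ) :
    (ℓ²(Γ, ℂ) →L[ℂ] ℓ²(Γ, ℂ)) ≃⋆ₐ[ℂ] (ℓ²(Γ, ℂ) →L[ℂ] ℓ²(Γ, ℂ)) :=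
  Unitary.conjStarAlgAut ℂ _ ⟨R g⁻¹, hR.mem_unitary g⁻¹⟩

theorem conj_apply (hR : IsRightTranslation R) (g : Γ) (A : ℓ²(Γ, ℂ) →L[ℂ] ℓ²(Γ, ℂ)) :
    hR.conj g A = R g⁻¹ * A * R g := by
  simp [conj, hR.star_apply]

end IsRightTranslation

theorem IsRightTranslation.isLimitOperator_iff [Countable Γ] (hR : IsRightTranslation R)
    {A B : ℓ²(Γ, ℂ) →L[ℂ] ℓ²(Γ, ℂ)} {g : ℕ → Γ} :
    IsLimitOperator R A g B ↔ TendstoStarStrongly (fun m => hR.conj (g m) A) atTop B := by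
  have hstar : ∀ r, star (hR.conj r A) = hR.conj r (star A) := fun r => (map_star _ _).symm
  simp only [TendstoStarStrongly, hstar]
  simp only [hR.conj_apply, ContinuousLinearMap.star_eq_adjoint]
  rfl

theorem IsRightTranslation.conj_eq_of_leftTranslation (hR : IsRightTranslation R)
    {T : ℓ²(Γ, ℂ) →L[ℂ] ℓ²(Γ, ℂ)} {t : Γ} (hT : ∀ u x, T u x = u (t⁻¹ * x)) (g : Γ) :
    hR.conj g T = T := by
  ext u x
  simp [hR.conj_apply, hR.apply_apply, hT, mul_assoc]

theorem IsMultiplicationOperator.conj (hR : IsRightTranslation R)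
    {T : ℓ²(Γ, ℂ) →L[ℂ] ℓ²(Γ, ℂ)} {a : Γ → ℂ} (hT : IsMultiplicationOperator T a) (g : Γ) :
    IsMultiplicationOperator (hR.conj g T) (fun x => a (x * g⁻¹)) := by
  intro u x
  simp only [hR.conj_apply, mul_apply_eq_comp, hR.apply_apply]
  rw [hT, hR.apply_apply, inv_mul_cancel_right]

theorem hasSubseqStarStrongLimits_of_isMultiplicationOperator [Countable Γ]
    (hR : IsRightTranslation R) {T : ℓ²(Γ, ℂ) →L[ℂ] ℓ²(Γ, ℂ)} {a : Γ → ℂ} {C : ℝ}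
    (hT : IsMultiplicationOperator T a) (ha : ∀ x, ‖a x‖ ≤ C) :
    HasSubseqStarStrongLimits hR.conj T := by
  intro h
  obtain ⟨φ, hφ, b, hb⟩ :=
    exists_strictMono_tendsto_pi_of_norm_le (a := fun m x => a (x * (h m)⁻¹)) fun m x => ha _
  obtain ⟨B, hB⟩ := exists_isMultiplicationOperator (C := C) fun x =>
    le_of_tendsto (hb x).norm (Eventually.of_forall fun m => ha _)
  exact ⟨φ, hφ, B, tendstoStarStrongly_of_isMultiplicationOperator
    (fun m => hT.conj hR (h (φ m))) hB (fun m x => ha _) hb⟩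

theorem IsRightTranslation.shiftAndMultOps_subset [Countable Γ] (hR : IsRightTranslation R) :
    ShiftAndMultOps Γ ⊆ subseqStarStrongLimitSubalgebra hR.conj := by
  rintro T (⟨a, ⟨C, hC⟩, hT⟩ | ⟨t, hT⟩)
  · exact hasSubseqStarStrongLimits_of_isMultiplicationOperator hR hT hC
  · exact hasSubseqStarStrongLimits_of_forall_eq (hR.conj_eq_of_leftTranslation hT)

end RightTranslations

theorem band_dominated_has_limit_operator_along_subsequence_general
    {Γ : Type*} [Group Γ] [Countable Γ]
    (R : Γ → (lp (fun _ : Γ => ℂ) 2 →L[ℂ] lp (fun _ : Γ => ℂ) 2))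
    (hR : ∀ (r : Γ) (u : lp (fun _ : Γ => ℂ) 2) (x : Γ), R r u x = u (x * r))
    (A : lp (fun _ : Γ => ℂ) 2 →L[ℂ] lp (fun _ : Γ => ℂ) 2)
    (hA : A ∈ BandDominatedOps Γ)
    (h : ℕ → Γ) :
    ∃ φ : ℕ → ℕ, StrictMono φ ∧
      ∃ B : lp (fun _ : Γ => ℂ) 2 →L[ℂ] lp (fun _ : Γ => ℂ) 2,
        IsLimitOperator R A (h ∘ φ) B := by
  have hR' : IsRightTranslation R := hR
  have hsub : BandDominatedOps Γ ⊆ subseqStarStrongLimitSubalgebra hR'.conj :=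
    closure_minimal (Algebra.adjoin_le hR'.shiftAndMultOps_subset)
      isClosed_subseqStarStrongLimitSubalgebra
  obtain ⟨φ, hφ, B, hB⟩ := hsub hA h
  exact ⟨φ, hφ, B, hR'.isLimitOperator_iff.2 hB⟩

/-- If `A` is a band-dominated operator on `l²(Γ)`, `Γ` a finitely
generated countable discrete group, then every sequence `h : ℕ → Γ` tending to
infinity has a subsequence `g = h ∘ φ` such that the limit operator `A_g`
exists. -/
theorem band_dominated_has_limit_operator_along_subsequence
    {Γ : Type*} [Group Γ] [Countable Γ] [Group.FG Γ]
    (R : Γ → (lp (fun _ : Γ => ℂ) 2 →L[ℂ] lp (fun _ : Γ => ℂ) 2))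
    (hR : ∀ (r : Γ) (u : lp (fun _ : Γ => ℂ) 2) (x : Γ), R r u x = u (x * r))
    (A : lp (fun _ : Γ => ℂ) 2 →L[ℂ] lp (fun _ : Γ => ℂ) 2)
    (hA : A ∈ BandDominatedOps Γ)
    (h : ℕ → Γ) (hh : TendsToInfinityGrp h) :
    ∃ φ : ℕ → ℕ, StrictMono φ ∧
      ∃ B : lp (fun _ : Γ => ℂ) 2 →L[ℂ] lp (fun _ : Γ => ℂ) 2,
        IsLimitOperator R A (h ∘ φ) B :=
  band_dominated_has_limit_operator_along_subsequence_general R hR A hA h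
end

section
/- If (v_n) is an inflating sequence for 𝒴 = (Y_n), then for every bounded sequence (A_n) of operators A_n on im P_{Y_n}, the series Σ_{n≥1} R_{v_n} A_n R_{v_n}⁻¹ converges strongly on l²(Γ), and the resulting map Op : ℱ_𝒴 → L(l²(Γ)) is a continuous algebra homomorphism. -/
/-! Conjugating by the translation `R (v n)` turns `A n` into an operator `T n` living in the
corner of `Q n = R (v n) * P n * R (v n)⁻¹`, which is multiplication by the indicator of
`Y n * (v n)⁻¹`. Being inflating makes the `Q n` pairwise orthogonal projections, so the vectors
`T n u` are pairwise orthogonal with `‖T n u‖ ≤ C * ‖Q n u‖`, and Bessel's inequality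
`∑ ‖Q n u‖ ^ 2 ≤ ‖u‖ ^ 2` gives convergence together with the norm bound. Multiplicativity holds
because `T n * S m = 0` for `m ≠ n`, so `T n` applied to `∑ S m u` only sees `S n u`. -/

section Corner

variable {M : Type*}

theorem mul_eq_zero_of_corner [SemigroupWithZero M] {ι : Type*} {Q T S : ι → M}
    (hQQ : Pairwise fun i j => Q i * Q j = 0) (hT : ∀ i, Q i * T i * Q i = T i)
    (hS : ∀ i, Q i * S i * Q i = S i) {i j : ι} (hij : i ≠ j) : T i * S j = 0 := by
  rw [← hT i, ← hS j]
  simp only [mul_assoc, ← mul_assoc (Q i) (Q j), hQQ hij, zero_mul, mul_zero]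

theorem conj_mul_conj [Monoid M] {U U' : M} (hU : U' * U = 1) (A B : M) :
    U * (A * U') * (U * (B * U')) = U * (A * B * U') := by
  simp only [mul_assoc, ← mul_assoc U' U, hU, one_mul]

theorem conj_corner [Monoid M] {U U' P A : M} (hU : U' * U = 1) (hA : P * A * P = A) :
    U * (P * U') * (U * (A * U')) * (U * (P * U')) = U * (A * U') := by
  rw [conj_mul_conj hU, conj_mul_conj hU, hA]

theorem norm_conj_le [NonUnitalSeminormedRing M] {U U' : M} (hU : ‖U‖ ≤ 1) (hU' : ‖U'‖ ≤ 1)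
    (A : M) : ‖U * (A * U')‖ ≤ ‖A‖ :=
  calc ‖U * (A * U')‖ ≤ ‖U‖ * (‖A‖ * ‖U'‖) :=
        (norm_mul_le _ _).trans (mul_le_mul_of_nonneg_left (norm_mul_le _ _) (norm_nonneg _))
    _ ≤ 1 * (‖A‖ * 1) := by gcongr
    _ = ‖A‖ := by ring

end Corner

namespace ContinuousLinearMap

section Module

variable {R M : Type*} [Semiring R] [AddCommMonoid M] [Module R M] [TopologicalSpace M]

theorem apply_mem_range_of_corner {Q T : M →L[R] M} (hT : Q * T * Q = T) (u : M) :
    T u ∈ (Q : M →ₗ[R] M).range :=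
  ⟨T (Q u), by rw [coe_coe, ← mul_apply_eq_comp, ← mul_apply_eq_comp, hT]⟩

theorem hasSum_mul_apply_of_corner [T2Space M] {ι : Type*} {Q T S : ι → M →L[R] M}
    (hQQ : Pairwise fun i j => Q i * Q j = 0)
    (hT : ∀ i, Q i * T i * Q i = T i) (hS : ∀ i, Q i * S i * Q i = S i) {ΦT ΦS : M →L[R] M}
    (hΦT : ∀ u, HasSum (fun i => T i u) (ΦT u)) (hΦS : ∀ u, HasSum (fun i => S i u) (ΦS u))
    (u : M) : HasSum (fun i => (T i * S i) u) (ΦT (ΦS u)) := by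
  have hdiag : ∀ i, T i (ΦS u) = (T i * S i) u := fun i =>
    ((hΦS u).mapL (T i)).unique <| hasSum_single i fun j hji => by
      rw [← mul_apply_eq_comp, mul_eq_zero_of_corner hQQ hT hS hji.symm, zero_apply]
  simpa only [hdiag] using hΦT (ΦS u)

end Module

theorem norm_apply_le_of_corner {𝕜 E : Type*} [NontriviallyNormedField 𝕜]
    [SeminormedAddCommGroup E] [NormedSpace 𝕜 E] {Q T : E →L[𝕜] E} (hQ : IsIdempotentElem Q)
    (hT : Q * T * Q = T) (u : E) :
    ‖T u‖ ≤ ‖T‖ * ‖Q u‖ := by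
  have hTQ : T * Q = T := by rw [← hT, mul_assoc, hQ.eq]
  calc ‖T u‖ = ‖T (Q u)‖ := by rw [← mul_apply_eq_comp, hTQ]
    _ ≤ ‖T‖ * ‖Q u‖ := le_opNorm _ _

section Hilbert

variable {𝕜 E ι : Type*} [RCLike 𝕜] [NormedAddCommGroup E] [InnerProductSpace 𝕜 E]
  [CompleteSpace E] {Q T : ι → E →L[𝕜] E}

theorem orthogonalFamily_range (hQ : ∀ i, IsSelfAdjoint (Q i))
    (hQQ : Pairwise fun i j => Q i * Q j = 0) :
    OrthogonalFamily 𝕜 (fun i => (Q i : E →ₗ[𝕜] E).range)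
      fun i => (Q i : E →ₗ[𝕜] E).range.subtypeₗᵢ := by
  rintro i j hij ⟨_, a, rfl⟩ ⟨_, b, rfl⟩
  calc inner 𝕜 (Q i a) (Q j b) = inner 𝕜 a ((Q i * Q j) b) := (hQ i).isSymmetric a (Q j b)
    _ = 0 := by rw [hQQ hij, zero_apply, inner_zero_right]

theorem sum_norm_sq_apply_le (hQ : ∀ i, IsStarProjection (Q i))
    (hQQ : Pairwise fun i j => Q i * Q j = 0) (s : Finset ι) (u : E) :
    ∑ i ∈ s, ‖Q i u‖ ^ 2 ≤ ‖u‖ ^ 2 := by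
  set w := ∑ i ∈ s, Q i u
  have hw : ‖w‖ ^ 2 = ∑ i ∈ s, ‖Q i u‖ ^ 2 :=
    (orthogonalFamily_range (fun i => (hQ i).isSelfAdjoint) hQQ).norm_sum
      (fun i => ⟨Q i u, LinearMap.mem_range_self _ u⟩) s
  have hinner : ∀ i, inner 𝕜 (Q i u) u = inner 𝕜 (Q i u) (Q i u) := fun i =>
    calc inner 𝕜 (Q i u) u = inner 𝕜 (Q i (Q i u)) u := by
          rw [← mul_apply_eq_comp, (hQ i).isIdempotentElem.eq]
      _ = inner 𝕜 (Q i u) (Q i u) := (hQ i).isSelfAdjoint.isSymmetric _ _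
  have hwu : ‖w‖ ^ 2 = RCLike.re (inner 𝕜 w u) := by
    simp only [w, sum_inner, hinner, map_sum, inner_self_eq_norm_sq, hw]
  have hcs : RCLike.re (inner 𝕜 w u) ≤ ‖w‖ * ‖u‖ := re_inner_le_norm w u
  rw [← hw]
  nlinarith [sq_nonneg (‖u‖ - ‖w‖), norm_nonneg w, norm_nonneg u]

theorem sum_norm_sq_apply_le_of_corner (hQ : ∀ i, IsStarProjection (Q i))
    (hQQ : Pairwise fun i j => Q i * Q j = 0) (hT : ∀ i, Q i * T i * Q i = T i) {C : ℝ}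
    (hC : ∀ i, ‖T i‖ ≤ C) (s : Finset ι) (u : E) :
    ∑ i ∈ s, ‖T i u‖ ^ 2 ≤ C ^ 2 * ‖u‖ ^ 2 :=
  calc ∑ i ∈ s, ‖T i u‖ ^ 2 ≤ ∑ i ∈ s, C ^ 2 * ‖Q i u‖ ^ 2 := by
        gcongr with i
        rw [← mul_pow]
        exact pow_le_pow_left₀ (norm_nonneg _) ((norm_apply_le_of_corner
          (hQ i).isIdempotentElem (hT i) u).trans (by gcongr; exact hC i)) 2
    _ ≤ C ^ 2 * ‖u‖ ^ 2 := by
        rw [← Finset.mul_sum]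
        exact mul_le_mul_of_nonneg_left (sum_norm_sq_apply_le hQ hQQ s u) (sq_nonneg C)

theorem norm_sum_apply_le_of_corner (hQ : ∀ i, IsStarProjection (Q i))
    (hQQ : Pairwise fun i j => Q i * Q j = 0) (hT : ∀ i, Q i * T i * Q i = T i) {C : ℝ}
    (hC : ∀ i, ‖T i‖ ≤ C) (hC0 : 0 ≤ C) (s : Finset ι) (u : E) :
    ‖∑ i ∈ s, T i u‖ ≤ C * ‖u‖ := by
  have hpyth : ‖∑ i ∈ s, T i u‖ ^ 2 = ∑ i ∈ s, ‖T i u‖ ^ 2 :=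
    (orthogonalFamily_range (fun i => (hQ i).isSelfAdjoint) hQQ).norm_sum
      (fun i => ⟨T i u, apply_mem_range_of_corner (hT i) u⟩) s
  rw [← pow_le_pow_iff_left₀ (norm_nonneg _) (by positivity) two_ne_zero, hpyth, mul_pow]
  exact sum_norm_sq_apply_le_of_corner hQ hQQ hT hC s u

theorem summable_apply_of_corner (hQ : ∀ i, IsStarProjection (Q i))
    (hQQ : Pairwise fun i j => Q i * Q j = 0) (hT : ∀ i, Q i * T i * Q i = T i) {C : ℝ}
    (hC : ∀ i, ‖T i‖ ≤ C) (u : E) :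
    Summable fun i => T i u :=
  ((orthogonalFamily_range (fun i => (hQ i).isSelfAdjoint) hQQ).summable_iff_norm_sq_summable
    (fun i => ⟨T i u, apply_mem_range_of_corner (hT i) u⟩)).2 <|
    summable_of_sum_le (fun _ => sq_nonneg _) (sum_norm_sq_apply_le_of_corner hQ hQQ hT hC · u)

theorem exists_hasSum_apply_of_corner (hQ : ∀ i, IsStarProjection (Q i))
    (hQQ : Pairwise fun i j => Q i * Q j = 0) (hT : ∀ i, Q i * T i * Q i = T i) {C : ℝ}
    (hC : ∀ i, ‖T i‖ ≤ C) (hC0 : 0 ≤ C) :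
    ∃ Φ : E →L[𝕜] E, (∀ u, HasSum (fun i => T i u) (Φ u)) ∧ ‖Φ‖ ≤ C := by
  have hsum := summable_apply_of_corner hQ hQQ hT hC
  let Φ : E →ₗ[𝕜] E :=
    { toFun u := ∑' i, T i u
      map_add' u w := by simp only [map_add, (hsum u).tsum_add (hsum w)]
      map_smul' c u := by simp only [map_smul, (hsum u).tsum_const_smul c, RingHom.id_apply] }
  have hΦ : ∀ u, ‖Φ u‖ ≤ C * ‖u‖ := fun u =>
    le_of_tendsto' (hsum u).hasSum.norm (norm_sum_apply_le_of_corner hQ hQQ hT hC hC0 · u)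
  exact ⟨Φ.mkContinuous C hΦ, fun u => (hsum u).hasSum, Φ.mkContinuous_norm_le hC0 hΦ⟩

end Hilbert

end ContinuousLinearMap

namespace lp

variable {𝕜 α : Type*} [RCLike 𝕜] {s t : Set α}
  {Q Q' : lp (fun _ : α => 𝕜) 2 →L[𝕜] lp (fun _ : α => 𝕜) 2}

theorem isStarProjection_of_apply_eq_indicator (hQ : ∀ u x, Q u x = s.indicator u x) :
    IsStarProjection Q where
  isIdempotentElem := by
    ext u x
    by_cases hx : x ∈ s <;> simp [hQ, hx]
  isSelfAdjoint := by
    rw [ContinuousLinearMap.isSelfAdjoint_iff_isSymmetric]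
    intro u w
    simp only [ContinuousLinearMap.coe_coe, inner_eq_tsum, hQ]
    congr 1 with x
    by_cases hx : x ∈ s <;> simp [hx]

theorem mul_eq_zero_of_apply_eq_indicator (hQ : ∀ u x, Q u x = s.indicator u x)
    (hQ' : ∀ u x, Q' u x = t.indicator u x) (hst : Disjoint s t) : Q * Q' = 0 := by
  ext u x
  have hx : x ∉ s ∨ x ∉ t := not_and_or.1 fun h => hst.notMem_of_mem_left h.1 h.2
  rcases hx with hx | hx <;> simp [hQ, hQ', hx]

variable {Γ : Type*} [Group Γ] {R : Γ → lp (fun _ : Γ => 𝕜) 2 →L[𝕜] lp (fun _ : Γ => 𝕜) 2}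

theorem inv_mul_eq_one_of_apply_eq_apply_mul (hR : ∀ r u x, R r u x = u (x * r)) (r : Γ) :
    R r⁻¹ * R r = 1 := by
  ext u x
  rw [mul_apply_eq_comp, hR, hR, inv_mul_cancel_right]
  rfl

theorem norm_le_one_of_apply_eq_apply_mul (hR : ∀ r u x, R r u x = u (x * r)) (r : Γ) :
    ‖R r‖ ≤ 1 := by
  refine ContinuousLinearMap.opNorm_le_bound _ zero_le_one fun u => le_of_eq ?_
  rw [one_mul, norm_eq_tsum_rpow (by norm_num), norm_eq_tsum_rpow (by norm_num)]
  simp only [hR]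
  congr 1
  exact (Equiv.mulRight r).tsum_eq (fun y => ‖u y‖ ^ (2 : ENNReal).toReal)

theorem conj_apply_eq_indicator (hR : ∀ r u x, R r u x = u (x * r)) {s : Set Γ}
    {Q : lp (fun _ : Γ => 𝕜) 2 →L[𝕜] lp (fun _ : Γ => 𝕜) 2}
    (hQ : ∀ u x, Q u x = s.indicator u x) (r : Γ) (u : lp (fun _ : Γ => 𝕜) 2) (x : Γ) :
    (R r * (Q * R r⁻¹)) u x = ((fun y => y * r⁻¹) '' s).indicator u x := by
  rw [mul_apply_eq_comp, mul_apply_eq_comp, hR, hQ, Set.image_mul_right, inv_inv]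
  by_cases hx : x * r ∈ s
  · rw [Set.indicator_of_mem hx, Set.indicator_of_mem (show x ∈ (· * r) ⁻¹' s from hx), hR,
      mul_inv_cancel_right]
  · rw [Set.indicator_of_notMem hx, Set.indicator_of_notMem (show x ∉ (· * r) ⁻¹' s from hx)]

end lp

theorem opMap_strong_convergence_and_homomorphism_general
    {Γ : Type*} [Group Γ]
    (Y : ℕ → Finset Γ)
    (v : ℕ → Γ)
    (hinfl : ∀ m n, m ≠ n →
      Disjoint ((fun y => y * (v m)⁻¹) '' (Y m : Set Γ))
               ((fun y => y * (v n)⁻¹) '' (Y n : Set Γ)))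
    (P : ℕ → (lp (fun _ : Γ => ℂ) 2 →L[ℂ] lp (fun _ : Γ => ℂ) 2))
    (hP : ∀ (n : ℕ) (u : lp (fun _ : Γ => ℂ) 2) (x : Γ),
      P n u x = ((Y n : Set Γ)).indicator (fun y => u y) x)
    (R : Γ → (lp (fun _ : Γ => ℂ) 2 →L[ℂ] lp (fun _ : Γ => ℂ) 2))
    (hR : ∀ (r : Γ) (u : lp (fun _ : Γ => ℂ) 2) (x : Γ), R r u x = u (x * r))
    (A B : ℕ → (lp (fun _ : Γ => ℂ) 2 →L[ℂ] lp (fun _ : Γ => ℂ) 2))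
    (hAcorner : ∀ n, A n = (P n).comp ((A n).comp (P n)))
    (hBcorner : ∀ n, B n = (P n).comp ((B n).comp (P n)))
    (CA CB : ℝ) (hCA : ∀ n, ‖A n‖ ≤ CA) (hCB : ∀ n, ‖B n‖ ≤ CB) :
    ∃ TA TB TS TP : lp (fun _ : Γ => ℂ) 2 →L[ℂ] lp (fun _ : Γ => ℂ) 2,
      (∀ u, HasSum (fun n => ((R (v n)).comp ((A n).comp (R (v n)⁻¹))) u) (TA u)) ∧
      (∀ u, HasSum (fun n => ((R (v n)).comp ((B n).comp (R (v n)⁻¹))) u) (TB u)) ∧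
      (∀ u, HasSum (fun n => ((R (v n)).comp (((A n + B n)).comp (R (v n)⁻¹))) u) (TS u)) ∧
      (∀ u, HasSum (fun n => ((R (v n)).comp (((A n).comp (B n)).comp (R (v n)⁻¹))) u) (TP u)) ∧
      TS = TA + TB ∧ TP = TA.comp TB ∧ ‖TA‖ ≤ CA := by
  set Q := fun n => R (v n) * (P n * R (v n)⁻¹)
  have hRinv n := lp.inv_mul_eq_one_of_apply_eq_apply_mul hR (v n)
  have hRnorm r := lp.norm_le_one_of_apply_eq_apply_mul hR r
  have hQind n := lp.conj_apply_eq_indicator hR (hP n) (v n)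
  have hQ n : IsStarProjection (Q n) := lp.isStarProjection_of_apply_eq_indicator (hQind n)
  have hQQ : Pairwise fun m n => Q m * Q n = 0 := fun m n hmn =>
    lp.mul_eq_zero_of_apply_eq_indicator (hQind m) (hQind n) (hinfl m n hmn)
  have hAQ n : Q n * (R (v n) * (A n * R (v n)⁻¹)) * Q n = R (v n) * (A n * R (v n)⁻¹) :=
    conj_corner (hRinv n) (by rw [mul_assoc]; exact (hAcorner n).symm)
  have hBQ n : Q n * (R (v n) * (B n * R (v n)⁻¹)) * Q n = R (v n) * (B n * R (v n)⁻¹) :=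
    conj_corner (hRinv n) (by rw [mul_assoc]; exact (hBcorner n).symm)
  obtain ⟨TA, hTA, hTAnorm⟩ := ContinuousLinearMap.exists_hasSum_apply_of_corner hQ hQQ hAQ
    (fun n => (norm_conj_le (hRnorm _) (hRnorm _) _).trans (hCA n))
    ((norm_nonneg _).trans (hCA 0))
  obtain ⟨TB, hTB, -⟩ := ContinuousLinearMap.exists_hasSum_apply_of_corner hQ hQQ hBQ
    (fun n => (norm_conj_le (hRnorm _) (hRnorm _) _).trans (hCB n))
    ((norm_nonneg _).trans (hCB 0))
  refine ⟨TA, TB, TA + TB, TA * TB, hTA, hTB, fun u => ?_, fun u => ?_, rfl, rfl, hTAnorm⟩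
  · simp only [← ContinuousLinearMap.mul_def, add_mul, mul_add, add_apply]
    exact (hTA u).add (hTB u)
  · simp only [← ContinuousLinearMap.mul_def, ← conj_mul_conj (hRinv _)]
    exact ContinuousLinearMap.hasSum_mul_apply_of_corner hQQ hAQ hBQ hTA hTB u

/-- If `(v_n)` is an inflating sequence for `𝒴 = (Y_n)`, then for
every bounded sequence `(A_n)` of operators on `im P_{Y_n}` the series
`Σ_n R_{v_n} A_n R_{v_n}⁻¹` converges strongly on `l²(Γ)`, and the resulting map
`Op` is a continuous algebra homomorphism on `ℱ_𝒴`: it is bounded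
(`‖Op(A)‖ ≤ sup ‖A_n‖`), additive and multiplicative. -/
theorem opMap_strong_convergence_and_homomorphism
    {Γ : Type*} [Group Γ] [Countable Γ]
    (Y : ℕ → Finset Γ) (hmono : Monotone Y)
    (hcup : ⋃ n, (Y n : Set Γ) = Set.univ)
    (v : ℕ → Γ)
    (hinfl : ∀ m n, m ≠ n →
      Disjoint ((fun y => y * (v m)⁻¹) '' (Y m : Set Γ))
               ((fun y => y * (v n)⁻¹) '' (Y n : Set Γ)))
    (P : ℕ → (lp (fun _ : Γ => ℂ) 2 →L[ℂ] lp (fun _ : Γ => ℂ) 2))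
    (hP : ∀ (n : ℕ) (u : lp (fun _ : Γ => ℂ) 2) (x : Γ),
      P n u x = ((Y n : Set Γ)).indicator (fun y => u y) x)
    (R : Γ → (lp (fun _ : Γ => ℂ) 2 →L[ℂ] lp (fun _ : Γ => ℂ) 2))
    (hR : ∀ (r : Γ) (u : lp (fun _ : Γ => ℂ) 2) (x : Γ), R r u x = u (x * r))
    (A B : ℕ → (lp (fun _ : Γ => ℂ) 2 →L[ℂ] lp (fun _ : Γ => ℂ) 2))
    (hAcorner : ∀ n, A n = (P n).comp ((A n).comp (P n)))
    (hBcorner : ∀ n, B n = (P n).comp ((B n).comp (P n)))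
    (CA CB : ℝ) (hCA : ∀ n, ‖A n‖ ≤ CA) (hCB : ∀ n, ‖B n‖ ≤ CB) :
    ∃ TA TB TS TP : lp (fun _ : Γ => ℂ) 2 →L[ℂ] lp (fun _ : Γ => ℂ) 2,
      (∀ u, HasSum (fun n => ((R (v n)).comp ((A n).comp (R (v n)⁻¹))) u) (TA u)) ∧
      (∀ u, HasSum (fun n => ((R (v n)).comp ((B n).comp (R (v n)⁻¹))) u) (TB u)) ∧
      (∀ u, HasSum (fun n => ((R (v n)).comp (((A n + B n)).comp (R (v n)⁻¹))) u) (TS u)) ∧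
      (∀ u, HasSum (fun n => ((R (v n)).comp (((A n).comp (B n)).comp (R (v n)⁻¹))) u) (TP u)) ∧
      TS = TA + TB ∧ TP = TA.comp TB ∧ ‖TA‖ ≤ CA :=
  opMap_strong_convergence_and_homomorphism_general Y v hinfl P hP R hR A B hAcorner hBcorner CA CB
    hCA hCB
end

section
/- Suppose that e ∈ Y v⁻¹h and Ω_{r-1} ∩ (∂_Ω Y) v⁻¹ h = ∅, where Y ⊆ Γ, v, h ∈ Γ, and r ≥ 1. Then Ω_{r-1} ⊆ Y v⁻¹ h. (Ω-boundaries have no gaps: any Ω-word path from an inside point to an outside point must cross the Ω-boundary.) -/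
/-! Right translation commutes with the left action of `Ω`, hence with `∂_Ω`, which reduces the
claim to `v⁻¹ h = e`. Then induct on words: a word of `Ω_{r-1}` lying in `Y` misses `∂_Ω Y`, so
it lies in `int_Ω Y`, and multiplying it on the left by any letter of `Ω` stays in `Y`. -/

/-- `Ω_n`: the set of all products of at most `n` elements of `Ω` (with `Ω₀ = {e}`). -/
def omegaWords {Γ : Type*} [Group Γ] (Ω : Finset Γ) (n : ℕ) : Set Γ :=
  {x | ∃ l : List Γ, (∀ w ∈ l, w ∈ Ω) ∧ l.length ≤ n ∧ l.prod = x}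

/-- The `Ω`-interior of a set `A ⊆ Γ`. -/
def omegaInterior {Γ : Type*} [Group Γ] (Ω : Finset Γ) (A : Set Γ) : Set Γ :=
  {a ∈ A | ∀ ω ∈ Ω, ω * a ∈ A}

/-- The `Ω`-boundary of a set `A ⊆ Γ`. -/
def omegaBoundary {Γ : Type*} [Group Γ] (Ω : Finset Γ) (A : Set Γ) : Set Γ :=
  A \ omegaInterior Ω A

section OmegaBoundary

variable {Γ : Type*} [Group Γ] (Ω : Finset Γ)

theorem omegaInterior_image_mul_right (A : Set Γ) (g : Γ) :
    omegaInterior Ω ((· * g) '' A) = (· * g) '' omegaInterior Ω A := by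
  ext x
  simp [omegaInterior, Set.image_mul_right, mul_assoc]

theorem omegaBoundary_image_mul_right (A : Set Γ) (g : Γ) :
    omegaBoundary Ω ((· * g) '' A) = (· * g) '' omegaBoundary Ω A := by
  rw [omegaBoundary, omegaBoundary, omegaInterior_image_mul_right,
    Set.image_sdiff (mul_left_injective g)]

theorem omegaWords_subset_of_one_mem_of_disjoint_omegaBoundary {A : Set Γ} {n : ℕ}
    (h1 : (1 : Γ) ∈ A) (hA : Disjoint (omegaWords Ω n) (omegaBoundary Ω A)) :
    omegaWords Ω n ⊆ A := by
  rintro _ ⟨l, hl, hlen, rfl⟩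
  induction l with
  | nil => simpa using h1
  | cons ω l ih =>
    have hlen' : l.length ≤ n := (Nat.le_succ _).trans hlen
    have hl' : ∀ w ∈ l, w ∈ Ω := fun w hw => hl w (List.mem_cons_of_mem _ hw)
    have hA' : l.prod ∈ A := ih hl' hlen'
    have hint : l.prod ∈ omegaInterior Ω A := by
      by_contra hnot
      exact hA.notMem_of_mem_left ⟨l, hl', hlen', rfl⟩ ⟨hA', hnot⟩
    simpa using hint.2 ω (hl ω List.mem_cons_self)

end OmegaBoundary

theorem omegaWords_subset_of_inner_of_disjoint_boundary_general
    {Γ : Type*} [Group Γ] (Ω : Finset Γ)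
    (Y : Set Γ) (v h : Γ) (r : ℕ)
    (h1 : (1 : Γ) ∈ (fun y => y * v⁻¹ * h) '' Y)
    (h2 : omegaWords Ω (r - 1) ∩ ((fun y => y * v⁻¹ * h) '' omegaBoundary Ω Y) = ∅) :
    omegaWords Ω (r - 1) ⊆ (fun y => y * v⁻¹ * h) '' Y := by
  have htrans : (fun y => y * v⁻¹ * h) = (· * (v⁻¹ * h)) := funext fun y => mul_assoc y v⁻¹ h
  rw [htrans] at h1 h2 ⊢
  rw [← omegaBoundary_image_mul_right, ← Set.disjoint_iff_inter_eq_empty] at h2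
  exact omegaWords_subset_of_one_mem_of_disjoint_omegaBoundary Ω h1 h2

/-- If `e ∈ Y v⁻¹ h` and `Ω_{r-1} ∩ (∂_Ω Y) v⁻¹ h = ∅`, then
`Ω_{r-1} ⊆ Y v⁻¹ h`: `Ω`-boundaries have no gaps. -/
theorem omegaWords_subset_of_inner_of_disjoint_boundary
    {Γ : Type*} [Group Γ] (Ω : Finset Γ) (he : (1 : Γ) ∈ Ω)
    (Y : Set Γ) (v h : Γ) (r : ℕ) (hr : 1 ≤ r)
    (h1 : (1 : Γ) ∈ (fun y => y * v⁻¹ * h) '' Y)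
    (h2 : omegaWords Ω (r - 1) ∩ ((fun y => y * v⁻¹ * h) '' omegaBoundary Ω Y) = ∅) :
    omegaWords Ω (r - 1) ⊆ (fun y => y * v⁻¹ * h) '' Y :=
  omegaWords_subset_of_inner_of_disjoint_boundary_general Ω Y v h r h1 h2
end
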